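/- Let M₁, M₂, M₃ be real m×m matrices, and define the 3m×3m block matrices A = [[I,0,0],[M₁,0,0],[M₁,0,0]], B = [[0,M₂,0],[0,I,0],[0,0,0]], C = [[0,0,M₃],[0,0,0],[0,0,I]] (blocks of size m×m, I the m×m identity). Then Σ = {A, B, C} is LCP, RCP and transversal if and only if there exist constants C₀ > 0 and 0 ≤ q < 1 such that every product of k factors, each factor equal to M₂M₁ or to M₃M₁, has matrix norm at most C₀ qᵏ, for all k ≥ 1. -/

import Mathlib

/-!
Each of `A`, `B`, `C` is an idempotent `u x * e x` whose only nonzero block column is `x`, and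
the transitions `e b * u a` between block columns are `I` on the diagonal, `M₂`, `M₃` out of
block `0`, `M₁` into block `0`, and `0` between blocks `1` and `2`. A left product is therefore
governed by the switches of its index sequence: with finitely many switches it is eventually
constant, a switch between `1` and `2` kills it, and otherwise (after the first visit to `0`) it
is `u x` times a product of loops `e 0 * u x * (e x * u 0) ∈ {M₂M₁, M₃M₁}`, whose number grows
with the number of switches, times `e 0`. So decay of long loop products gives LCP, and RCP by
transposition. Conversely, along `0, x₀, 0, x₁, …` consecutive left products differ by `M₁`
times a product of loops, so LCP forces every infinite product of loops to tend to `0`; by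
compactness of the space of sequences this decay is uniform, hence exponential. Transversality
holds for all `M₁, M₂, M₃`: for one index it is `range ⊕ ker` of an idempotent, and for two or
more indices the kernels already span and the ranges meet in `0`.
-/

open Filter Topology Matrix

attribute [local instance] Matrix.normedAddCommGroup

/-- Left products `L_m = A_{j_m} ⋯ A_{j_1}` (with `L_0 = I`). -/
noncomputable def leftProd {ι : Type*} [Fintype ι] [DecidableEq ι] {k : ℕ}
    (A : Fin k → Matrix ι ι ℝ) (j : ℕ → Fin k) : ℕ → Matrix ι ι ℝ
  | 0 => 1
  | m + 1 => A (j m) * leftProd A j m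

/-- Right products `R_m = A_{j_1} ⋯ A_{j_m}` (with `R_0 = I`). -/
noncomputable def rightProd {ι : Type*} [Fintype ι] [DecidableEq ι] {k : ℕ}
    (A : Fin k → Matrix ι ι ℝ) (j : ℕ → Fin k) : ℕ → Matrix ι ι ℝ
  | 0 => 1
  | m + 1 => rightProd A j m * A (j m)

/-- Σ is LCP: for every sequence of indices the left products converge. -/
def IsLCP {ι : Type*} [Fintype ι] [DecidableEq ι] {k : ℕ}
    (A : Fin k → Matrix ι ι ℝ) : Prop :=
  ∀ j : ℕ → Fin k, ∃ L : Matrix ι ι ℝ, Tendsto (leftProd A j) atTop (𝓝 L)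

/-- Σ is RCP: for every sequence of indices the right products converge. -/
def IsRCP {ι : Type*} [Fintype ι] [DecidableEq ι] {k : ℕ}
    (A : Fin k → Matrix ι ι ℝ) : Prop :=
  ∀ j : ℕ → Fin k, ∃ R : Matrix ι ι ℝ, Tendsto (rightProd A j) atTop (𝓝 R)

/-- `N_{J'} = ∩_{j ∈ J'} ker (I - A_j)`. -/
noncomputable def Nspace {ι : Type*} [Fintype ι] [DecidableEq ι] {k : ℕ}
    (A : Fin k → Matrix ι ι ℝ) (J' : Set (Fin k)) : Submodule ℝ (ι → ℝ) :=
  ⨅ j ∈ J', LinearMap.ker (Matrix.mulVecLin (1 - A j))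

/-- `R_{J'} = span of ∪_{j ∈ J'} range (I - A_j)`. -/
noncomputable def Rspace {ι : Type*} [Fintype ι] [DecidableEq ι] {k : ℕ}
    (A : Fin k → Matrix ι ι ℝ) (J' : Set (Fin k)) : Submodule ℝ (ι → ℝ) :=
  ⨆ j ∈ J', LinearMap.range (Matrix.mulVecLin (1 - A j))

/-- Σ is transversal: `N_{J'} ⊕ R_{J'} = ℝⁿ` for every `J' ⊆ J`. -/
def IsTransversal {ι : Type*} [Fintype ι] [DecidableEq ι] {k : ℕ}
    (A : Fin k → Matrix ι ι ℝ) : Prop :=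
  ∀ J' : Set (Fin k), Nspace A J' ⊓ Rspace A J' = ⊥ ∧ Nspace A J' ⊔ Rspace A J' = ⊤

/-- The block matrix `A = [[I,0,0],[M₁,0,0],[M₁,0,0]]` (blocks of size m×m). -/
noncomputable def blkA {m : ℕ} (M₁ : Matrix (Fin m) (Fin m) ℝ) :
    Matrix (Fin 3 × Fin m) (Fin 3 × Fin m) ℝ := fun p q =>
  if q.1 = 0 then
    (if p.1 = 0 then (1 : Matrix (Fin m) (Fin m) ℝ) p.2 q.2 else M₁ p.2 q.2)
  else 0

/-- The block matrix `B = [[0,M₂,0],[0,I,0],[0,0,0]]` (blocks of size m×m). -/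
noncomputable def blkB {m : ℕ} (M₂ : Matrix (Fin m) (Fin m) ℝ) :
    Matrix (Fin 3 × Fin m) (Fin 3 × Fin m) ℝ := fun p q =>
  if q.1 = 1 then
    (if p.1 = 0 then M₂ p.2 q.2
     else if p.1 = 1 then (1 : Matrix (Fin m) (Fin m) ℝ) p.2 q.2 else 0)
  else 0

/-- The block matrix `C = [[0,0,M₃],[0,0,0],[0,0,I]]` (blocks of size m×m). -/
noncomputable def blkC {m : ℕ} (M₃ : Matrix (Fin m) (Fin m) ℝ) :
    Matrix (Fin 3 × Fin m) (Fin 3 × Fin m) ℝ := fun p q =>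
  if q.1 = 2 then
    (if p.1 = 0 then M₃ p.2 q.2
     else if p.1 = 2 then (1 : Matrix (Fin m) (Fin m) ℝ) p.2 q.2 else 0)
  else 0


section LeftProducts

variable {ι : Type*} [Fintype ι] [DecidableEq ι] {k : ℕ} (A : Fin k → Matrix ι ι ℝ) (j : ℕ → Fin k)

theorem leftProd_eq_prod_reverse_ofFn (n : ℕ) :
    leftProd A j n = (List.ofFn fun i : Fin n => A (j i)).reverse.prod := by
  induction n with
  | zero => rfl
  | succ n ih => rw [List.ofFn_succ', List.concat_eq_append]; simp [leftProd, ih]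

theorem leftProd_add (n p : ℕ) :
    leftProd A j (n + p) = leftProd A (fun i => j (n + i)) p * leftProd A j n := by
  induction p with
  | zero => simp [leftProd]
  | succ p ih => rw [← add_assoc, leftProd, leftProd, ih, Matrix.mul_assoc]

theorem rightProd_eq_transpose_leftProd (n : ℕ) :
    rightProd A j n = (leftProd (fun x => (A x)ᵀ) j n)ᵀ := by
  induction n with
  | zero => simp [leftProd, rightProd]
  | succ n ih => simp [leftProd, rightProd, ih, Matrix.transpose_mul]

theorem tendsto_leftProd_of_tail (n : ℕ) {L : Matrix ι ι ℝ}
    (h : Tendsto (leftProd A (fun i => j (n + i))) atTop (𝓝 L)) :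
    Tendsto (leftProd A j) atTop (𝓝 (L * leftProd A j n)) := by
  rw [← tendsto_add_atTop_iff_nat n]
  simpa only [add_comm _ n, leftProd_add] using h.mul_const (leftProd A j n)

theorem tendsto_leftProd_of_eq_zero {n : ℕ} (h : leftProd A j n = 0) :
    Tendsto (leftProd A j) atTop (𝓝 0) := by
  rw [← tendsto_add_atTop_iff_nat n]
  simp only [add_comm _ n, leftProd_add, h, Matrix.mul_zero, tendsto_const_nhds]

theorem tendsto_leftProd_of_eventually_const {N : ℕ} (hA : A (j N) * A (j N) = A (j N))
    (hj : ∀ i, N ≤ i → j (i + 1) = j i) :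
    Tendsto (leftProd A j) atTop (𝓝 (A (j N) * leftProd A j N)) := by
  have hconst : ∀ i, j (N + i) = j N := fun i => by
    induction i with
    | zero => rfl
    | succ i ih => rw [← add_assoc, hj _ (Nat.le_add_right N i), ih]
  have hprod : ∀ n, leftProd A (fun i => j (N + i)) (n + 1) = A (j N) := fun n => by
    induction n with
    | zero => simp [leftProd]
    | succ n ih => rw [leftProd, ih, hconst, hA]
  refine tendsto_leftProd_of_tail A j N ?_
  rw [← tendsto_add_atTop_iff_nat 1]
  simp only [hprod, tendsto_const_nhds]

end LeftProducts

theorem List.ofFn_getD_reverse_eq_drop {α β : Type*} (g : α → β) (l : List α) (a : α) {n : ℕ}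
    (hn : n ≤ l.length) :
    (List.ofFn fun i : Fin n => g (l.reverse.getD i a)).reverse =
      (l.drop (l.length - n)).map g := by
  have : (List.ofFn fun i : Fin n => g (l.reverse.getD i a)) = (l.reverse.take n).map g := by
    apply List.ext_getElem
    · simp [hn]
    · intro i h _
      simp only [List.length_ofFn] at h
      simp only [List.getElem_ofFn, List.getElem_map, List.getElem_take]
      rw [List.getD_eq_getElem]
  rw [this, ← List.map_reverse, List.take_reverse, List.reverse_reverse]

section UniformStability

variable {S : Type*} [NormedRing S] {ι : Type*}

theorem norm_prod_map_le (g : ι → S) {K : ℝ} (hK : ∀ i, ‖g i‖ ≤ K) (l : List ι) :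
    ‖(l.map g).prod‖ ≤ ‖(1 : S)‖ * K ^ l.length := by
  induction l with
  | nil => simp
  | cons a l ih =>
    rw [List.map_cons, List.prod_cons, List.length_cons, pow_succ']
    calc ‖g a * (l.map g).prod‖ ≤ ‖g a‖ * ‖(l.map g).prod‖ := norm_mul_le _ _
      _ ≤ K * (‖(1 : S)‖ * K ^ l.length) :=
        mul_le_mul (hK a) ih (norm_nonneg _) ((norm_nonneg _).trans (hK a))
      _ = ‖(1 : S)‖ * (K * K ^ l.length) := by ring

/-- By compactness of `ℕ → ι`, the time at which a left product becomes small is bounded. -/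
theorem exists_forall_exists_norm_prod_lt [Finite ι] (g : ι → S)
    (h : ∀ σ : ℕ → ι,
      Tendsto (fun n => (List.ofFn fun i : Fin n => g (σ i)).reverse.prod) atTop (𝓝 0)) :
    ∃ N, 0 < N ∧ ∀ σ : ℕ → ι, ∃ n, 0 < n ∧ n ≤ N ∧
      ‖(List.ofFn fun i : Fin n => g (σ i)).reverse.prod‖ < 2⁻¹ := by
  let _ : TopologicalSpace ι := ⊥
  have : DiscreteTopology ι := ⟨rfl⟩
  set U : ℕ → Set (ℕ → ι) :=
    fun n => {σ | ‖(List.ofFn fun i : Fin (n + 1) => g (σ i)).reverse.prod‖ < 2⁻¹}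
  have hU : ∀ n, IsOpen (U n) := fun n => by
    have hprefix : Continuous fun (σ : ℕ → ι) (i : Fin (n + 1)) => σ i :=
      continuous_pi fun i => continuous_apply _
    exact isOpen_lt ((continuous_of_discreteTopology (f := fun w : Fin (n + 1) → ι =>
      ‖(List.ofFn fun i => g (w i)).reverse.prod‖)).comp hprefix) continuous_const
  have hcover : Set.univ ⊆ ⋃ n, U n := fun σ _ => by
    obtain ⟨n, hn⟩ := ((tendsto_zero_iff_norm_tendsto_zero.1 (h σ)).eventually
      (gt_mem_nhds (by norm_num : (0 : ℝ) < 2⁻¹))).exists_forall_of_atTop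
    exact Set.mem_iUnion.2 ⟨n, hn (n + 1) (Nat.le_succ n)⟩
  obtain ⟨t, ht⟩ := isCompact_univ.elim_finite_subcover U hU hcover
  refine ⟨t.sup id + 1, Nat.succ_pos _, fun σ => ?_⟩
  obtain ⟨n, hnt, hn⟩ := Set.mem_iUnion₂.1 (ht (Set.mem_univ σ))
  exact ⟨n + 1, Nat.succ_pos n, Nat.succ_le_succ (Finset.le_sup (f := id) hnt), hn⟩

theorem exists_norm_prod_le_of_tendsto_zero [Finite ι] (g : ι → S)
    (h : ∀ σ : ℕ → ι,
      Tendsto (fun n => (List.ofFn fun i : Fin n => g (σ i)).reverse.prod) atTop (𝓝 0)) :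
    ∃ C, 0 < C ∧ ∃ q, 0 ≤ q ∧ q < 1 ∧ ∀ l : List ι, ‖(l.map g).prod‖ ≤ C * q ^ l.length := by
  obtain ⟨N, hN0, hN⟩ := exists_forall_exists_norm_prod_lt g h
  obtain ⟨K₀, hK₀⟩ := (Set.finite_range fun i => ‖g i‖).bddAbove
  set K := max K₀ 1
  have hK : ∀ i, ‖g i‖ ≤ K := fun i => (hK₀ ⟨i, rfl⟩).trans (le_max_left _ _)
  set q : ℝ := 2⁻¹ ^ (N⁻¹ : ℝ)
  have hq0 : 0 ≤ q := by positivity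
  have hq1 : q < 1 := Real.rpow_lt_one (by norm_num) (by norm_num) (by positivity)
  have hqN : q ^ N = 2⁻¹ := Real.rpow_inv_natCast_pow (by norm_num) hN0.ne'
  set C := 2 * ((‖(1 : S)‖ + 1) * K ^ N)
  refine ⟨C, by positivity, q, hq0, hq1, fun l => ?_⟩
  induction' hl : l.length using Nat.strong_induction_on with len ih generalizing l
  subst hl
  rcases lt_or_ge l.length N with hlen | hlen
  · calc ‖(l.map g).prod‖ ≤ ‖(1 : S)‖ * K ^ l.length := norm_prod_map_le g hK l
      _ ≤ (‖(1 : S)‖ + 1) * K ^ N := by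
        gcongr
        · linarith
        · exact le_max_right _ _
      _ = C * q ^ N := by rw [hqN]; ring
      _ ≤ C * q ^ l.length :=
        mul_le_mul_of_nonneg_left (pow_le_pow_of_le_one hq0 hq1.le hlen.le) (by positivity)
  · -- split off a final block of length `n ≤ N` whose product has norm `< 1/2 = q ^ N`
    obtain ⟨a, -⟩ := List.exists_mem_of_length_pos (hN0.trans_le hlen)
    obtain ⟨n, hn0, hnN, hsmall⟩ := hN fun i => l.reverse.getD i a
    rw [List.ofFn_getD_reverse_eq_drop g l a (hnN.trans hlen)] at hsmall
    set l₁ := l.take (l.length - n)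
    have hl₁ : l₁.length = l.length - n := by simp [l₁]
    calc ‖(l.map g).prod‖ = ‖(l₁.map g).prod * ((l.drop (l.length - n)).map g).prod‖ := by
          rw [← List.prod_append, ← List.map_append, List.take_append_drop]
      _ ≤ ‖(l₁.map g).prod‖ * ‖((l.drop (l.length - n)).map g).prod‖ := norm_mul_le _ _
      _ ≤ C * q ^ (l.length - n) * q ^ n := by
        gcongr
        · exact ih _ (by omega) l₁ hl₁
        · calc _ ≤ 2⁻¹ := hsmall.le
            _ = q ^ N := hqN.symm
            _ ≤ q ^ n := pow_le_pow_of_le_one hq0 hq1.le hnN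
      _ = C * q ^ l.length := by rw [mul_assoc, ← pow_add, Nat.sub_add_cancel (hnN.trans hlen)]

end UniformStability

namespace Matrix

variable {n : Type*} [Fintype n] [DecidableEq n]

/-- The entrywise sup norm is not submultiplicative, but it is dominated by the operator norm
of the action on `n → ℝ`, which is. -/
noncomputable def toCLMHom : Matrix n n ℝ →* ((n → ℝ) →L[ℝ] (n → ℝ)) where
  toFun A := LinearMap.toContinuousLinearMap (toLin' A)
  map_one' := by ext; simp
  map_mul' A B := by ext; simp [toLin'_mul]

theorem continuous_toCLMHom : Continuous (toCLMHom : Matrix n n ℝ → _) :=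
  LinearMap.continuous_of_finiteDimensional
    (LinearMap.toContinuousLinearMap.toLinearMap ∘ₗ (toLin' : Matrix n n ℝ ≃ₗ[ℝ] _).toLinearMap)

theorem toCLMHom_zero : toCLMHom (0 : Matrix n n ℝ) = 0 := by
  ext; simp [toCLMHom]

theorem norm_le_norm_toCLMHom (A : Matrix n n ℝ) : ‖A‖ ≤ ‖toCLMHom A‖ := by
  refine (norm_le_iff (norm_nonneg _)).2 fun i j => ?_
  calc ‖A i j‖ = ‖(toCLMHom A (Pi.single j 1)) i‖ := by simp [toCLMHom, mulVec_single]
    _ ≤ ‖toCLMHom A (Pi.single j 1)‖ := norm_le_pi_norm _ i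
    _ ≤ ‖toCLMHom A‖ * ‖(Pi.single j 1 : n → ℝ)‖ := (toCLMHom A).le_opNorm _
    _ = ‖toCLMHom A‖ := by simp [Pi.norm_single]

theorem exists_norm_prod_le_of_tendsto_leftProd {k : ℕ} (A : Fin k → Matrix n n ℝ)
    (h : ∀ j, Tendsto (leftProd A j) atTop (𝓝 0)) :
    ∃ C, 0 < C ∧ ∃ q, 0 ≤ q ∧ q < 1 ∧ ∀ l : List (Fin k), ‖(l.map A).prod‖ ≤ C * q ^ l.length := by
  have hΦ : ∀ j N, toCLMHom (leftProd A j N) =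
      (List.ofFn fun i : Fin N => toCLMHom (A (j i))).reverse.prod := fun j N => by
    rw [leftProd_eq_prod_reverse_ofFn, map_list_prod, List.map_reverse, List.map_ofFn]; rfl
  obtain ⟨C, hC, q, hq0, hq1, hb⟩ := exists_norm_prod_le_of_tendsto_zero (toCLMHom ∘ A) fun j => by
    have := (continuous_toCLMHom.tendsto 0).comp (h j)
    rw [toCLMHom_zero] at this
    exact this.congr (hΦ j)
  refine ⟨C, hC, q, hq0, hq1, fun l => (norm_le_norm_toCLMHom _).trans ?_⟩
  simpa [map_list_prod] using hb l

end Matrix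

theorem tendsto_comap_length_of_norm_le {ι E : Type*} [SeminormedAddCommGroup E]
    {P : List ι → E} {C q : ℝ} (hq0 : 0 ≤ q) (hq1 : q < 1)
    (h : ∀ l, l ≠ [] → ‖P l‖ ≤ C * q ^ l.length) :
    Tendsto P (comap List.length atTop) (𝓝 0) := by
  have hlim : Tendsto (fun l : List ι => C * q ^ l.length) (comap List.length atTop) (𝓝 0) := by
    simpa only [mul_zero, Function.comp_def] using
      ((tendsto_pow_atTop_nhds_zero_of_lt_one hq0 hq1).const_mul C).comp tendsto_comap
  refine squeeze_zero_norm' (eventually_comap.2 ((eventually_ge_atTop 1).mono ?_)) hlim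
  rintro n hn l rfl
  exact h l (List.ne_nil_of_length_pos hn)

theorem tendsto_prod_map_transpose {ι n : Type*} [Fintype n] [DecidableEq n]
    (g : ι → Matrix n n ℝ)
    (h : Tendsto (fun l : List ι => (l.map g).prod) (comap List.length atTop) (𝓝 0)) :
    Tendsto (fun l : List ι => (l.map fun i => (g i)ᵀ).prod) (comap List.length atTop) (𝓝 0) := by
  have hrev : Tendsto List.reverse (comap List.length atTop) (comap (List.length (α := ι)) atTop) :=
    tendsto_comap_iff.2 (by simpa only [Function.comp_def, List.length_reverse] using tendsto_comap)
  have hprod : ∀ l : List ι, (l.map fun i => (g i)ᵀ).prod = ((l.reverse.map g).prod)ᵀ := fun l => by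
    rw [Matrix.transpose_list_prod, List.map_map, ← List.map_reverse, List.reverse_reverse]; rfl
  simpa only [hprod, Function.comp_def, id, Matrix.transpose_zero] using
    (continuous_id.matrix_transpose.tendsto 0).comp (h.comp hrev)

theorem tendsto_count_switches {α : Type*} {σ : ℕ → α} [DecidablePred fun i => σ (i + 1) ≠ σ i]
    (hσ : {i | σ (i + 1) ≠ σ i}.Infinite) :
    Tendsto (Nat.count fun i => σ (i + 1) ≠ σ i) atTop atTop :=
  tendsto_atTop_atTop_of_monotone (Nat.count_monotone _) fun b =>
    ⟨Nat.nth _ b, (Nat.count_nth_of_infinite hσ b).ge⟩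

def alternating (y : ℕ → Fin 2) (i : ℕ) : Fin 3 :=
  if i % 2 = 0 then 0 else (y (i / 2)).succ

theorem alternating_two_mul (y : ℕ → Fin 2) (n : ℕ) : alternating y (2 * n) = 0 := by
  simp [alternating]

theorem alternating_two_mul_add_one (y : ℕ → Fin 2) (n : ℕ) :
    alternating y (2 * n + 1) = (y n).succ := by
  rw [alternating, if_neg (by omega), show (2 * n + 1) / 2 = n by omega]

section StarFactorization

variable {V W : Type*} [Fintype V]

def loop [Fintype W] (u : Fin 3 → Matrix V W ℝ) (e : Fin 3 → Matrix W V ℝ) (j : Fin 2) :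
    Matrix W W ℝ :=
  e 0 * u j.succ * (e j.succ * u 0)

theorem loop_transpose [Fintype W] (u : Fin 3 → Matrix V W ℝ) (e : Fin 3 → Matrix W V ℝ) :
    loop (fun x => (e x)ᵀ) (fun x => (u x)ᵀ) = fun j => (loop u e j)ᵀ := by
  ext1 j
  simp only [loop, Matrix.transpose_mul, Matrix.mul_assoc]

variable [DecidableEq W]

/-- The idempotents `u x * e x` (`x : Fin 3`) as states of a star with centre `0`, where
`e b * u a` is the transition from state `a` to state `b`; `loop u e j` is then the transition
around `0 → j.succ → 0`. -/
structure IsStarFactorization (u : Fin 3 → Matrix V W ℝ) (e : Fin 3 → Matrix W V ℝ) : Prop where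
  mul_self : ∀ x, e x * u x = 1
  leaf_mul_leaf : ∀ a b, a ≠ 0 → b ≠ 0 → b ≠ a → e b * u a = 0

variable {u : Fin 3 → Matrix V W ℝ} {e : Fin 3 → Matrix W V ℝ}

theorem IsStarFactorization.transpose (h : IsStarFactorization u e) :
    IsStarFactorization (fun x => (e x)ᵀ) (fun x => (u x)ᵀ) where
  mul_self x := by rw [← Matrix.transpose_mul, h.mul_self, Matrix.transpose_one]
  leaf_mul_leaf a b ha hb hab := by
    rw [← Matrix.transpose_mul, h.leaf_mul_leaf b a hb ha hab.symm, Matrix.transpose_zero]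

variable [Fintype W]

/-- The products reached from `u 0 * e 0` after `s` switches of state, ending in state `x`:
`0`, or a product through `ℓ` loops, each of which accounts for two switches. -/
def Reachable (u : Fin 3 → Matrix V W ℝ) (e : Fin 3 → Matrix W V ℝ) (s : ℕ) (x : Fin 3)
    (X : Matrix V V ℝ) : Prop :=
  X = 0 ∨ ∃ l : List (Fin 2), s ≤ 2 * l.length + (if x = 0 then 0 else 1) ∧
    X = u x * (e x * u 0) * (l.map (loop u e)).prod * e 0

theorem Reachable.mono {s s' : ℕ} {x : Fin 3} {X : Matrix V V ℝ} (hs : s' ≤ s)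
    (hX : Reachable u e s x X) : Reachable u e s' x X :=
  hX.imp_right fun ⟨l, hl, hX⟩ => ⟨l, hs.trans hl, hX⟩

theorem exists_forall_reachable_mem
    (hdecay : Tendsto (fun l : List (Fin 2) => (l.map (loop u e)).prod)
      (comap List.length atTop) (𝓝 0))
    {U : Set (Matrix V V ℝ)} (hU : U ∈ 𝓝 0) :
    ∃ s, ∀ x X, Reachable u e s x X → X ∈ U := by
  have hx : ∀ x, Tendsto (fun l : List (Fin 2) => u x * (e x * u 0) * (l.map (loop u e)).prod * e 0)
      (comap List.length atTop) (𝓝 0) := fun x => by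
    have hcont : Continuous fun Y : Matrix W W ℝ => u x * (e x * u 0) * Y * e 0 :=
      (continuous_const.matrix_mul continuous_id).matrix_mul continuous_const
    simpa only [Function.comp_def, Matrix.mul_zero, Matrix.zero_mul] using
      (hcont.tendsto 0).comp hdecay
  obtain ⟨ℓ, hℓ⟩ := eventually_atTop.1 (eventually_comap.1 (eventually_all.2 fun x => hx x hU))
  refine ⟨2 * ℓ + 1, fun x X hX => ?_⟩
  obtain rfl | ⟨l, hl, rfl⟩ := hX
  · exact mem_of_mem_nhds hU
  · exact hℓ l.length (by split_ifs at hl <;> omega) l rfl x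

namespace IsStarFactorization

theorem idempotent (h : IsStarFactorization u e) (x : Fin 3) :
    u x * e x * (u x * e x) = u x * e x := by
  rw [Matrix.mul_assoc, ← Matrix.mul_assoc (e x), h.mul_self, Matrix.one_mul]

theorem reachable_start (h : IsStarFactorization u e) : Reachable u e 0 0 (u 0 * e 0) :=
  Or.inr ⟨[], Nat.zero_le _, by simp [h.mul_self]⟩

theorem reachable_mul (h : IsStarFactorization u e) {s : ℕ} {a : Fin 3} {X : Matrix V V ℝ}
    (hX : Reachable u e s a X) (b : Fin 3) :
    Reachable u e (s + if b = a then 0 else 1) b (u b * e b * X) := by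
  obtain rfl | ⟨l, hl, rfl⟩ := hX
  · exact Or.inl (Matrix.mul_zero _)
  have hX : u b * e b * (u a * (e a * u 0) * (l.map (loop u e)).prod * e 0) =
      u b * (e b * u a) * (e a * u 0) * (l.map (loop u e)).prod * e 0 := by
    simp only [Matrix.mul_assoc]
  rw [hX]
  by_cases hba : b = a
  · subst hba
    exact Or.inr ⟨l, by simpa using hl, by rw [h.mul_self, Matrix.mul_one]⟩
  by_cases ha : a = 0
  · subst ha
    refine Or.inr ⟨l, by simp only [if_pos, if_neg hba] at hl ⊢; omega, ?_⟩
    rw [h.mul_self 0, Matrix.mul_one]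
  by_cases hb : b = 0
  · subst hb
    obtain ⟨j, rfl⟩ := Fin.exists_succ_eq.2 ha
    refine Or.inr ⟨j :: l, ?_, ?_⟩
    · simp only [if_neg ha, if_neg (Ne.symm ha), if_pos, List.length_cons] at hl ⊢
      omega
    simp only [List.map_cons, List.prod_cons, loop, h.mul_self 0, Matrix.mul_one,
      Matrix.mul_assoc]
  · exact Or.inl (by rw [h.leaf_mul_leaf a b ha hb hba]; simp)

variable [DecidableEq V]

theorem reachable_leftProd (h : IsStarFactorization u e) {σ : ℕ → Fin 3} (hσ : σ 0 = 0)
    (n : ℕ) :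
    Reachable u e (Nat.count (fun i => σ (i + 1) ≠ σ i) n) (σ n)
      (leftProd (fun x => u x * e x) σ (n + 1)) := by
  induction n with
  | zero => simpa [leftProd, hσ] using h.reachable_start
  | succ n ih =>
    have := h.reachable_mul ih (σ (n + 1))
    rw [Nat.count_succ, leftProd]
    convert this using 2
    simp [ite_not]

theorem tendsto_leftProd_zero (h : IsStarFactorization u e)
    (hdecay : Tendsto (fun l : List (Fin 2) => (l.map (loop u e)).prod)
      (comap List.length atTop) (𝓝 0))
    {σ : ℕ → Fin 3} (hσ : σ 0 = 0) (hsw : {i | σ (i + 1) ≠ σ i}.Infinite) :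
    Tendsto (leftProd (fun x => u x * e x) σ) atTop (𝓝 0) := by
  rw [← tendsto_add_atTop_iff_nat 1]
  intro U hU
  obtain ⟨s, hs⟩ := exists_forall_reachable_mem hdecay hU
  exact ((tendsto_count_switches hsw).eventually_ge_atTop s).mono fun n hn =>
    hs _ _ ((h.reachable_leftProd hσ n).mono hn)

theorem isLCP (h : IsStarFactorization u e)
    (hdecay : Tendsto (fun l : List (Fin 2) => (l.map (loop u e)).prod)
      (comap List.length atTop) (𝓝 0)) :
    IsLCP fun x => u x * e x := by
  intro σ
  by_cases hsw : {i | σ (i + 1) ≠ σ i}.Infinite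
  · by_cases hzero : ∃ τ, σ τ = 0
    · obtain ⟨τ, hτ⟩ := hzero
      have htail : {i | σ (τ + i + 1) ≠ σ (τ + i)}.Infinite :=
        Set.infinite_of_forall_exists_gt fun a => by
          obtain ⟨b, hb, hab⟩ := hsw.exists_gt (τ + a)
          exact ⟨b - τ, by simpa [Nat.add_sub_cancel' (by omega : τ ≤ b)] using hb, by omega⟩
      exact ⟨_, tendsto_leftProd_of_tail _ σ τ (h.tendsto_leftProd_zero hdecay hτ htail)⟩
    · simp only [not_exists] at hzero
      obtain ⟨i, hi⟩ := hsw.nonempty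
      refine ⟨0, tendsto_leftProd_of_eq_zero _ σ (n := i + 2) ?_⟩
      rw [leftProd, leftProd, ← Matrix.mul_assoc, Matrix.mul_assoc (u _),
        ← Matrix.mul_assoc (e _) (u _), h.leaf_mul_leaf _ _ (hzero i) (hzero (i + 1)) hi]
      simp
  · obtain ⟨N, hN⟩ := (Set.not_infinite.1 hsw).bddAbove
    refine ⟨_, tendsto_leftProd_of_eventually_const _ σ (N := N + 1) (h.idempotent _)
      fun i hi => ?_⟩
    by_contra hne
    exact absurd (hN hne) (by omega)

theorem isRCP (h : IsStarFactorization u e)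
    (hdecay : Tendsto (fun l : List (Fin 2) => (l.map (loop u e)).prod)
      (comap List.length atTop) (𝓝 0)) :
    IsRCP fun x => u x * e x := by
  intro j
  obtain ⟨L, hL⟩ := h.transpose.isLCP (by
    rw [loop_transpose]; exact tendsto_prod_map_transpose _ hdecay) j
  refine ⟨Lᵀ, ?_⟩
  have hR : ∀ n, rightProd (fun x => u x * e x) j n =
      (leftProd (fun x => (e x)ᵀ * (u x)ᵀ) j n)ᵀ := fun n => by
    simp only [rightProd_eq_transpose_leftProd, Matrix.transpose_mul]
  exact ((continuous_id.matrix_transpose.tendsto L).comp hL).congr fun n => (hR n).symm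

end IsStarFactorization

variable [DecidableEq V]

theorem leftProd_alternating (y : ℕ → Fin 2) (n : ℕ) :
    leftProd (fun x => u x * e x) (alternating y) (2 * n + 1) =
        u 0 * leftProd (loop u e) y n * e 0 ∧
      leftProd (fun x => u x * e x) (alternating y) (2 * n + 2) =
        u (y n).succ * (e (y n).succ * u 0) * leftProd (loop u e) y n * e 0 := by
  have heven : ∀ n, leftProd (fun x => u x * e x) (alternating y) (2 * n + 1) =
        u 0 * leftProd (loop u e) y n * e 0 →
      leftProd (fun x => u x * e x) (alternating y) (2 * n + 2) =
        u (y n).succ * (e (y n).succ * u 0) * leftProd (loop u e) y n * e 0 := fun n hn => by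
    rw [leftProd, hn, alternating_two_mul_add_one]; simp only [Matrix.mul_assoc]
  refine (fun hodd => ⟨hodd, heven n hodd⟩) ?_
  induction n with
  | zero => simp [leftProd, (alternating_two_mul y 0 : alternating y 0 = 0)]
  | succ n ih =>
    rw [show 2 * (n + 1) + 1 = 2 * n + 2 + 1 by ring, leftProd, heven n ih,
      show 2 * n + 2 = 2 * (n + 1) by ring, alternating_two_mul]
    simp only [leftProd, loop, Matrix.mul_assoc]

theorem IsStarFactorization.tendsto_leftProd_loop (h : IsStarFactorization u e)
    (h10 : e 1 * u 0 = e 2 * u 0) (hL : IsLCP fun x => u x * e x) (y : ℕ → Fin 2) :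
    Tendsto (leftProd (loop u e) y) atTop (𝓝 0) := by
  set P := leftProd (loop u e) y
  set D := fun n => leftProd (fun x => u x * e x) (alternating y) (2 * n + 1) -
    leftProd (fun x => u x * e x) (alternating y) (2 * n + 2)
  have hleaf : ∀ j : Fin 2, e j.succ * u 0 = e 1 * u 0 := fun j => by
    fin_cases j
    · rfl
    · exact h10.symm
  -- the blocks `1` and `2` of `D n` isolate `e 1 * u 0 * P n`
  have hsandwich : ∀ a (Y : Matrix W W ℝ),
      (e 1 + e 2) * (u a * Y * e 0) * u 0 = (e 1 * u a + e 2 * u a) * Y := fun a Y => by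
    simp only [Matrix.add_mul, Matrix.mul_assoc, h.mul_self 0, Matrix.mul_one]
  have hD : ∀ n, (e 1 + e 2) * D n * u 0 = e 1 * u 0 * P n := fun n => by
    obtain ⟨hodd, heven⟩ := leftProd_alternating (u := u) (e := e) y n
    simp only [D, P]
    rw [heven, hodd, Matrix.mul_sub, Matrix.sub_mul, Matrix.mul_assoc (u (y n).succ),
      hsandwich, hsandwich, hleaf]
    generalize y n = j
    fin_cases j <;> simp [h.mul_self, h.leaf_mul_leaf, h10, Matrix.add_mul, Matrix.mul_assoc]
  obtain ⟨L, hL⟩ := hL (alternating y)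
  have hM : Tendsto (fun n => e 1 * u 0 * P n) atTop (𝓝 0) := by
    have hcont : Continuous fun X : Matrix V V ℝ => (e 1 + e 2) * X * u 0 :=
      (continuous_const.matrix_mul continuous_id).matrix_mul continuous_const
    have hDlim : Tendsto D atTop (𝓝 0) := by
      simpa only [sub_self, Function.comp_def] using
        (hL.comp (tendsto_atTop_mono (fun n => (by omega : n ≤ 2 * n + 1)) tendsto_id)).sub
          (hL.comp (tendsto_atTop_mono (fun n => (by omega : n ≤ 2 * n + 2)) tendsto_id))
    simpa only [Function.comp_def, Matrix.mul_zero, Matrix.zero_mul, hD] using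
      (hcont.tendsto 0).comp hDlim
  rw [← tendsto_add_atTop_iff_nat 1]
  intro U hU
  refine (eventually_all.2 fun j : Fin 2 =>
    (hM.const_mul (e 0 * u j.succ)) (by simpa using hU)).mono fun n hn => ?_
  have hstep : P (n + 1) = e 0 * u (y n).succ * (e 1 * u 0 * P n) := by
    simp only [P, leftProd, loop, hleaf, Matrix.mul_assoc]
  simpa [hstep] using hn (y n)

end StarFactorization

section Blocks

variable {m : ℕ} (M₁ M₂ M₃ : Matrix (Fin m) (Fin m) ℝ)

/-- `blockTable a b` is the block in block row `a` of the matrix `![A, B, C] b`, whose block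
columns other than `b` vanish. -/
def blockTable : Fin 3 → Fin 3 → Matrix (Fin m) (Fin m) ℝ :=
  ![![1, M₂, M₃], ![M₁, 1, 0], ![M₁, 0, 1]]

def blockCol (b : Fin 3) : Matrix (Fin 3 × Fin m) (Fin m) ℝ :=
  Matrix.of fun p q => blockTable M₁ M₂ M₃ p.1 b p.2 q

def blockRow (m : ℕ) (a : Fin 3) : Matrix (Fin m) (Fin 3 × Fin m) ℝ :=
  Matrix.of fun p q => if q = (a, p) then 1 else 0

theorem blockRow_mul {γ : Type*} (a : Fin 3) (X : Matrix (Fin 3 × Fin m) γ ℝ) :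
    blockRow m a * X = Matrix.of fun p r => X (a, p) r := by
  ext p r
  simp [blockRow, Matrix.mul_apply]

theorem mul_blockRow {γ : Type*} [Fintype γ] (Y : Matrix γ (Fin m) ℝ) (b : Fin 3) :
    Y * blockRow m b = Matrix.of fun r q => if q.1 = b then Y r q.2 else 0 := by
  ext r ⟨c, q⟩
  by_cases hc : c = b
  · simp [blockRow, Matrix.mul_apply, hc]
  · simp [blockRow, Matrix.mul_apply, hc]

theorem blockRow_mulVec (a : Fin 3) (v : Fin 3 × Fin m → ℝ) :
    blockRow m a *ᵥ v = fun p => v (a, p) := by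
  ext p
  simp [blockRow, Matrix.mulVec, dotProduct]

theorem blockRow_mul_blockCol (a b : Fin 3) :
    blockRow m a * blockCol M₁ M₂ M₃ b = blockTable M₁ M₂ M₃ a b := by
  rw [blockRow_mul]; rfl

theorem blocks_eq_blockCol_mul_blockRow :
    ![blkA M₁, blkB M₂, blkC M₃] = fun x => blockCol M₁ M₂ M₃ x * blockRow m x := by
  ext1 x
  ext ⟨a, p⟩ ⟨b, q⟩
  rw [mul_blockRow]
  fin_cases x
  · unfold blkA
    by_cases hb : b = 0 <;> simp only [hb] <;> fin_cases a <;> rfl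
  · unfold blkB
    by_cases hb : b = 1 <;> simp only [hb] <;> fin_cases a <;> rfl
  · unfold blkC
    by_cases hb : b = 2 <;> simp only [hb] <;> fin_cases a <;> rfl

theorem isStarFactorization_blocks :
    IsStarFactorization (blockCol M₁ M₂ M₃) (blockRow m) where
  mul_self x := by rw [blockRow_mul_blockCol]; fin_cases x <;> rfl
  leaf_mul_leaf a b ha hb hab := by
    rw [blockRow_mul_blockCol]
    fin_cases a <;> fin_cases b <;>
      first | rfl | exact absurd rfl ha | exact absurd rfl hb | exact absurd rfl hab

theorem loop_blocks : loop (blockCol M₁ M₂ M₃) (blockRow m) = ![M₂ * M₁, M₃ * M₁] := by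
  ext1 j
  simp only [loop, blockRow_mul_blockCol]
  fin_cases j <;> rfl

theorem eq_zero_or_eq_zero_of_blockCol_mulVec_eq {i j : Fin 3} (hij : i ≠ j) {a b : Fin m → ℝ}
    (hab : blockCol M₁ M₂ M₃ i *ᵥ a = blockCol M₁ M₂ M₃ j *ᵥ b) :
    a = 0 ∨ b = 0 := by
  have h : ∀ z, blockTable M₁ M₂ M₃ z i *ᵥ a = blockTable M₁ M₂ M₃ z j *ᵥ b := fun z => by
    simpa only [Matrix.mulVec_mulVec, blockRow_mul_blockCol] using
      congrArg (blockRow m z *ᵥ ·) hab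
  have h1 := h 1
  have h2 := h 2
  fin_cases i <;> fin_cases j <;> simp [blockTable] at h1 h2 hij ⊢ <;> simp_all

theorem blockCol_mul_blockRow_mulVec_eq_zero {x : Fin 3} {v : Fin 3 × Fin m → ℝ}
    (hv : ∀ p, v (x, p) = 0) : (blockCol M₁ M₂ M₃ x * blockRow m x) *ᵥ v = 0 := by
  rw [← Matrix.mulVec_mulVec, blockRow_mulVec, funext hv]
  exact Matrix.mulVec_zero _

end Blocks

open LinearMap in
theorem isTransversal_of_pairwise {ι : Type*} [Fintype ι] [DecidableEq ι] {k : ℕ}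
    (A : Fin k → Matrix ι ι ℝ) (hA : ∀ j, A j * A j = A j)
    (hker : ∀ i j, i ≠ j → ker (A i).mulVecLin ⊔ ker (A j).mulVecLin = ⊤)
    (hrange : ∀ i j, i ≠ j → range (A i).mulVecLin ⊓ range (A j).mulVecLin = ⊥) :
    IsTransversal A := by
  have hidem : ∀ j, IsIdempotentElem (A j).mulVecLin := fun j => by
    rw [IsIdempotentElem, Module.End.mul_eq_comp, ← Matrix.mulVecLin_mul, hA]
  have hsub : ∀ j, (1 - A j).mulVecLin = 1 - (A j).mulVecLin := fun j => by
    rw [← Matrix.toLin'_apply', ← Matrix.toLin'_apply', map_sub, Matrix.toLin'_one]; rfl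
  have hN : ∀ j, ker (1 - A j).mulVecLin = range (A j).mulVecLin := fun j => by
    rw [hsub, (hidem j).range_eq_ker_one_sub]
  have hR : ∀ j, range (1 - A j).mulVecLin = ker (A j).mulVecLin := fun j => by
    rw [hsub, (hidem j).ker_eq_range_one_sub]
  intro J
  rcases J.subsingleton_or_nontrivial with hJ | ⟨i, hi, j, hj, hij⟩
  · rcases hJ.eq_empty_or_singleton with rfl | ⟨j, rfl⟩
    · simp [Nspace, Rspace]
    · simp only [Nspace, Rspace, Set.mem_singleton_iff, iInf_iInf_eq_left, iSup_iSup_eq_left,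
        hN, hR]
      exact ⟨(hidem j).isCompl.inf_eq_bot, (hidem j).isCompl.sup_eq_top⟩
  · have hNbot : Nspace A J = ⊥ := eq_bot_iff.2 <| by
      rw [← hrange i j hij, ← hN, ← hN]
      exact le_inf (iInf₂_le i hi) (iInf₂_le j hj)
    have hRtop : Rspace A J = ⊤ := eq_top_iff.2 <| by
      rw [← hker i j hij, ← hR, ← hR]
      exact sup_le (le_iSup₂ (f := fun j _ => range (1 - A j).mulVecLin) i hi)
        (le_iSup₂ (f := fun j _ => range (1 - A j).mulVecLin) j hj)
    simp [hNbot, hRtop]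

open LinearMap in
theorem isTransversal_blocks {m : ℕ} (M₁ M₂ M₃ : Matrix (Fin m) (Fin m) ℝ) :
    IsTransversal fun x => blockCol M₁ M₂ M₃ x * blockRow m x := by
  refine isTransversal_of_pairwise _ (isStarFactorization_blocks M₁ M₂ M₃).idempotent
    (fun i j hij => eq_top_iff.2 fun v _ => ?_) (fun i j hij => ?_)
  · set w : Fin 3 × Fin m → ℝ := fun p => if p.1 = i then v p else 0
    refine Submodule.mem_sup.2 ⟨v - w, ?_, w, ?_, sub_add_cancel v w⟩
    · exact blockCol_mul_blockRow_mulVec_eq_zero M₁ M₂ M₃ fun p => by simp [w]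
    · exact blockCol_mul_blockRow_mulVec_eq_zero M₁ M₂ M₃ fun p => by simp [w, Ne.symm hij]
  · refine (Submodule.eq_bot_iff _).2 fun v hv => ?_
    obtain ⟨⟨a, rfl⟩, ⟨b, hb⟩⟩ := Submodule.mem_inf.1 hv
    simp only [Matrix.mulVecLin_apply, ← Matrix.mulVec_mulVec] at hb ⊢
    rcases eq_zero_or_eq_zero_of_blockCol_mulVec_eq M₁ M₂ M₃ hij hb.symm with h | h
    · rw [h, Matrix.mulVec_zero]
    · rw [← hb, h, Matrix.mulVec_zero]

theorem norm_prod_ofFn_le {M : Type*} [Monoid M] [Norm M] (g : Fin 2 → M) {C q : ℝ}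
    (h : ∀ l : List (Fin 2), ‖(l.map g).prod‖ ≤ C * q ^ l.length) {k : ℕ} (f : Fin k → M)
    (hf : ∀ i, f i = g 0 ∨ f i = g 1) :
    ‖(List.ofFn f).prod‖ ≤ C * q ^ k := by
  have hy : ∀ i, ∃ j, f i = g j := fun i => (hf i).elim (fun h => ⟨0, h⟩) fun h => ⟨1, h⟩
  choose y hy using hy
  simpa [List.map_ofFn, Function.comp_def, ← hy] using h (List.ofFn y)

theorem norm_prod_map_le_of_norm_prod_ofFn_le {M : Type*} [Monoid M] [Norm M] (g : Fin 2 → M)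
    {C q : ℝ} (h : ∀ k : ℕ, 1 ≤ k → ∀ f : Fin k → M, (∀ i, f i = g 0 ∨ f i = g 1) →
      ‖(List.ofFn f).prod‖ ≤ C * q ^ k)
    (l : List (Fin 2)) (hl : l ≠ []) :
    ‖(l.map g).prod‖ ≤ C * q ^ l.length := by
  rw [← List.ofFn_get l, List.map_ofFn, List.length_ofFn]
  have hg : ∀ j, g j = g 0 ∨ g j = g 1 := Fin.forall_fin_two.2 ⟨Or.inl rfl, Or.inr rfl⟩
  exact h _ (List.length_pos_iff.2 hl) _ fun i => hg _

/-- `Σ = {A, B, C}` (the block matrices built from `M₁, M₂, M₃`)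
is LCP, RCP and transversal iff the pair `{M₂M₁, M₃M₁}` is asymptotically
stable: products of `k` factors, each equal to `M₂M₁` or `M₃M₁`, are bounded in
norm by `C₀ qᵏ` with `q < 1`. -/
theorem block_family_cp_iff {m : ℕ}
    (M₁ M₂ M₃ : Matrix (Fin m) (Fin m) ℝ) :
    (IsLCP ![blkA M₁, blkB M₂, blkC M₃] ∧ IsRCP ![blkA M₁, blkB M₂, blkC M₃] ∧
        IsTransversal ![blkA M₁, blkB M₂, blkC M₃]) ↔
      ∃ C₀ : ℝ, 0 < C₀ ∧ ∃ q : ℝ, 0 ≤ q ∧ q < 1 ∧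
        ∀ k : ℕ, 1 ≤ k → ∀ f : Fin k → Matrix (Fin m) (Fin m) ℝ,
          (∀ i, f i = M₂ * M₁ ∨ f i = M₃ * M₁) →
          ‖(List.ofFn f).prod‖ ≤ C₀ * q ^ k := by
  have hstar := isStarFactorization_blocks M₁ M₂ M₃
  rw [blocks_eq_blockCol_mul_blockRow]
  constructor
  · rintro ⟨hLCP, -, -⟩
    have h10 : blockRow m 1 * blockCol M₁ M₂ M₃ 0 = blockRow m 2 * blockCol M₁ M₂ M₃ 0 := by
      simp only [blockRow_mul_blockCol]; rfl
    obtain ⟨C, hC, q, hq0, hq1, hb⟩ := Matrix.exists_norm_prod_le_of_tendsto_leftProd _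
      (hstar.tendsto_leftProd_loop h10 hLCP)
    rw [loop_blocks] at hb
    exact ⟨C, hC, q, hq0, hq1, fun k _ f hf => norm_prod_ofFn_le _ hb f hf⟩
  · rintro ⟨C, -, q, hq0, hq1, hb⟩
    have hdecay : Tendsto (fun l : List (Fin 2) =>
        (l.map (loop (blockCol M₁ M₂ M₃) (blockRow m))).prod) (comap List.length atTop) (𝓝 0) := by
      rw [loop_blocks]
      exact tendsto_comap_length_of_norm_le hq0 hq1 (norm_prod_map_le_of_norm_prod_ofFn_le _ hb)
    exact ⟨hstar.isLCP hdecay, hstar.isRCP hdecay, isTransversal_blocks M₁ M₂ M₃⟩
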